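/- Let C be a Hom-finite, Krull–Schmidt, k-linear triangulated category, (X,Y) a torsion pair in C with core I, and D a subcategory satisfying condition (RF) with D ⊆ X ⊆ (D[-1])⊥. Let (X',Y') = (μ⁻¹(X;D), μ⁻¹(Y;D[1])) with core I'. If I = D, then I' = I, X' ⊆ X and Y ⊆ Y'. -/

import Mathlib

/-!
Shifting a torsion triangle `X₁ → B[-1] → Y₀ → X₁[1]` of `B ∈ 𝒴` exhibits `X₁[1]` as an
extension of `B` by `Y₀`, so `X₁[1] ∈ 𝒴` and `X₁` lies in the core `𝒟`; hence
`𝒴 ⊆ 𝒟[1] * 𝒴[1]`. With `Hom(𝒴, 𝒟[2]) = 0`, which comes from `⊥(𝒟[1]) = (𝒟[-1])⊥`, this gives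
`𝒴 ⊆ 𝒴'`. A map from `M ∈ 𝒳' ⊆ 𝒟 * 𝒳[1]` to `B ∈ 𝒴 ⊆ 𝒟[1] * 𝒴[1]` factors through
`M → 𝒟[1]`, so it vanishes and `𝒳' ⊆ 𝒳`. In the core, an object `N ∈ 𝒳[1] ∩ 𝒴'` has zero map
to its `𝒴[1]`-part, so it is a summand of an object of `𝒟[1]`; as `Hom(𝒳, 𝒟[1]) = 0`, it lies
in `𝒴`. Conversely, by rigidity the split triangles `D → D → 0` put `𝒟` into `𝒳'` and `𝒟[1]`
into `𝒴'`.

Membership in `𝒳` or `𝒴` is always detected by `Hom`-vanishing: a torsion triangle with a zero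
map splits, exhibiting the object as a direct summand of a member of the class.
-/

open CategoryTheory CategoryTheory.Limits CategoryTheory.Pretriangulated

variable {C : Type*} [Category C] [Preadditive C] [HasZeroObject C]
  [HasShift C ℤ] [∀ n : ℤ, (shiftFunctor C n).Additive] [Pretriangulated C]

/-- `Hom(𝒳, 𝒴) = 0`. -/
def homZero (𝒳 𝒴 : Set C) : Prop :=
  ∀ ⦃A B : C⦄, A ∈ 𝒳 → B ∈ 𝒴 → ∀ f : A ⟶ B, f = 0

/-- The shift `𝒳[n]` of a subcategory (closed under isomorphisms). -/
def shiftSet (𝒳 : Set C) (n : ℤ) : Set C :=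
  {Z | ∃ A ∈ 𝒳, Nonempty ((A⟦n⟧) ≅ Z)}

/-- The class `𝒳 * 𝒴` of extensions. -/
def extClass (𝒳 𝒴 : Set C) : Set C :=
  {Z | ∃ (A B : C) (f : A ⟶ Z) (g : Z ⟶ B) (h : B ⟶ A⟦(1:ℤ)⟧),
      A ∈ 𝒳 ∧ B ∈ 𝒴 ∧ Triangle.mk f g h ∈ distTriang C}

/-- A torsion pair: `Hom(𝒳,𝒴) = 0` and `C = 𝒳 * 𝒴`. -/
def IsTorsionPair (𝒳 𝒴 : Set C) : Prop :=
  homZero 𝒳 𝒴 ∧ ∀ Z : C, Z ∈ extClass 𝒳 𝒴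

/-- A cotorsion pair: `Hom(𝒳,𝒲[1]) = 0` and `C = 𝒳 * 𝒲[1]`. -/
def IsCotorsionPair (𝒳 𝒲 : Set C) : Prop :=
  IsTorsionPair 𝒳 (shiftSet 𝒲 (1:ℤ))

/-- Full subcategory closed under isomorphisms, finite direct sums and direct summands. -/
structure IsSubcat (𝒳 : Set C) : Prop where
  mem_of_iso : ∀ ⦃A B : C⦄, (A ≅ B) → A ∈ 𝒳 → B ∈ 𝒳
  biprod_mem : ∀ ⦃A B : C⦄, A ∈ 𝒳 → B ∈ 𝒳 → (A ⊞ B) ∈ 𝒳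
  mem_of_biprod : ∀ ⦃A B : C⦄, (A ⊞ B) ∈ 𝒳 → A ∈ 𝒳 ∧ B ∈ 𝒳

/-- `⊥(𝒟[1]) = {M : Hom(M, 𝒟[1]) = 0}`. -/
def leftPerpShift (𝒟 : Set C) : Set C :=
  {M : C | ∀ D ∈ 𝒟, ∀ f : M ⟶ (D⟦(1:ℤ)⟧), f = 0}

/-- `(𝒟[-1])⊥ = {M : Hom(𝒟[-1], M) = 0}`. -/
def shiftRightPerp (𝒟 : Set C) : Set C :=
  {M : C | ∀ D ∈ 𝒟, ∀ f : (D⟦(-1:ℤ)⟧) ⟶ M, f = 0}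

/-- `A` admits a left `𝒟`-approximation. -/
def HasLeftApprox (𝒟 : Set C) (A : C) : Prop :=
  ∃ D ∈ 𝒟, ∃ f : A ⟶ D, ∀ D' ∈ 𝒟, ∀ g : A ⟶ D', ∃ h : D ⟶ D', f ≫ h = g

/-- `A` admits a right `𝒟`-approximation. -/
def HasRightApprox (𝒟 : Set C) (A : C) : Prop :=
  ∃ D ∈ 𝒟, ∃ f : D ⟶ A, ∀ D' ∈ 𝒟, ∀ g : D' ⟶ A, ∃ h : D' ⟶ D, h ≫ f = g

/-- `μ⁻¹(ℳ;𝒟) = (𝒟 * ℳ[1]) ∩ ⊥(𝒟[1])`. -/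
def muInv (ℳ 𝒟 : Set C) : Set C :=
  extClass 𝒟 (shiftSet ℳ (1:ℤ)) ∩ leftPerpShift 𝒟

/-- `μ(𝒩;𝒟) = (𝒩[-1] * 𝒟) ∩ (𝒟[-1])⊥`. -/
def mu (𝒩 𝒟 : Set C) : Set C :=
  extClass (shiftSet 𝒩 (-1:ℤ)) 𝒟 ∩ shiftRightPerp 𝒟

/-- `(ℳ,𝒩)` is a `𝒟`-mutation pair. -/
def IsMutationPair (ℳ 𝒩 𝒟 : Set C) : Prop :=
  ℳ = mu 𝒩 𝒟 ∧ 𝒩 = muInv ℳ 𝒟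

/-- Condition (RF): `𝒟` is functorially finite, rigid and `⊥(𝒟[1]) = (𝒟[-1])⊥`. -/
def RF (𝒟 : Set C) : Prop :=
  (∀ A : C, HasLeftApprox 𝒟 A) ∧ (∀ A : C, HasRightApprox 𝒟 A) ∧
    homZero 𝒟 (shiftSet 𝒟 (1:ℤ)) ∧ leftPerpShift 𝒟 = shiftRightPerp 𝒟

/-- The Ext-injective objects of `𝒳`. -/
def extInj (𝒳 : Set C) : Set C :=
  {T : C | T ∈ 𝒳 ∧ ∀ A ∈ 𝒳, ∀ f : A ⟶ (T⟦(1:ℤ)⟧), f = 0}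

/-- The Ext-projective objects of `𝒴`. -/
def extProj (𝒴 : Set C) : Set C :=
  {T : C | T ∈ 𝒴 ∧ ∀ B ∈ 𝒴, ∀ f : T ⟶ (B⟦(1:ℤ)⟧), f = 0}

open ZeroObject

section ShiftSet

variable {𝒳 : Set C}

omit [Preadditive C] [HasZeroObject C] [∀ n : ℤ, (shiftFunctor C n).Additive]
  [Pretriangulated C]

lemma shift_mem_shiftSet {A : C} (hA : A ∈ 𝒳) (n : ℤ) : A⟦n⟧ ∈ shiftSet 𝒳 n :=
  ⟨A, hA, ⟨Iso.refl _⟩⟩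

lemma mem_shiftSet_of_shift_mem {m n : ℤ} (h : m + n = 0) {A : C} (hA : A⟦m⟧ ∈ 𝒳) :
    A ∈ shiftSet 𝒳 n :=
  ⟨A⟦m⟧, hA, ⟨(shiftFunctorCompIsoId C m n h).app A⟩⟩

end ShiftSet

section HomZero

variable {𝒳 𝒴 𝒳' 𝒴' 𝒟 : Set C}

omit [HasZeroObject C] [∀ n : ℤ, (shiftFunctor C n).Additive] [Pretriangulated C]

omit [HasShift C ℤ] in
lemma homZero.mono (h : homZero 𝒳 𝒴) (h𝒳 : 𝒳' ⊆ 𝒳) (h𝒴 : 𝒴' ⊆ 𝒴) : homZero 𝒳' 𝒴' :=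
  fun _ _ hA hB f => h (h𝒳 hA) (h𝒴 hB) f

lemma mem_leftPerpShift_iff {M : C} :
    M ∈ leftPerpShift 𝒟 ↔ ∀ E ∈ shiftSet 𝒟 1, ∀ f : M ⟶ E, f = 0 := by
  refine ⟨?_, fun h D hD => h _ (shift_mem_shiftSet hD 1)⟩
  rintro h E ⟨D, hD, ⟨e⟩⟩ f
  simpa using h D hD (f ≫ e.inv)

lemma subset_leftPerpShift_iff : 𝒳 ⊆ leftPerpShift 𝒟 ↔ homZero 𝒳 (shiftSet 𝒟 1) :=
  ⟨fun h _ E hA hE => mem_leftPerpShift_iff.1 (h hA) E hE,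
    fun h _ hA => mem_leftPerpShift_iff.2 fun _ hE => h hA hE⟩

lemma subset_shiftRightPerp_iff : 𝒳 ⊆ shiftRightPerp 𝒟 ↔ homZero (shiftSet 𝒟 (-1)) 𝒳 := by
  refine ⟨?_, fun h _ hA D hD => h (shift_mem_shiftSet hD (-1)) hA⟩
  rintro h E A ⟨D, hD, ⟨e⟩⟩ hA f
  simpa using h hA D hD (e.hom ≫ f)

end HomZero

section HomZeroShift

variable {𝒳 𝒴 𝒟 : Set C}

omit [HasZeroObject C] [Pretriangulated C]

lemma homZero.shift (h : homZero 𝒳 𝒴) (n : ℤ) : homZero (shiftSet 𝒳 n) (shiftSet 𝒴 n) := by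
  rintro _ _ ⟨A, hA, ⟨eA⟩⟩ ⟨B, hB, ⟨eB⟩⟩ f
  have hf : eA.hom ≫ f ≫ eB.inv = 0 := by
    rw [← (shiftFunctor C n).map_preimage (eA.hom ≫ f ≫ eB.inv),
      h hA hB ((shiftFunctor C n).preimage _), Functor.map_zero]
  simpa using hf

lemma subset_leftPerpShift_shiftSet (hperp : leftPerpShift 𝒟 = shiftRightPerp 𝒟)
    (hDY : homZero 𝒟 𝒴) : 𝒴 ⊆ leftPerpShift (shiftSet 𝒟 1) := by
  have hYneg : shiftSet 𝒴 (-1) ⊆ leftPerpShift 𝒟 :=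
    hperp ▸ subset_shiftRightPerp_iff.2 (hDY.shift (-1))
  exact subset_leftPerpShift_iff.2 <|
    ((subset_leftPerpShift_iff.1 hYneg).shift 1).mono
      (fun B hB => mem_shiftSet_of_shift_mem (neg_add_cancel 1) (shift_mem_shiftSet hB (-1)))
      subset_rfl

end HomZeroShift

omit [Pretriangulated C] in
lemma zero_mem_shiftSet {𝒳 : Set C} (h : (0 : C) ∈ 𝒳) (n : ℤ) : (0 : C) ∈ shiftSet 𝒳 n :=
  ⟨0, h, ⟨((shiftFunctor C n).map_isZero (isZero_zero C)).iso (isZero_zero C)⟩⟩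

section Extension

variable {𝒜 ℬ : Set C}

lemma mem_extClass_iff {Z : C} :
    Z ∈ extClass 𝒜 ℬ ↔ ∃ T ∈ distTriang C, T.obj₁ ∈ 𝒜 ∧ T.obj₃ ∈ ℬ ∧ T.obj₂ = Z := by
  refine ⟨fun ⟨A, B, f, g, h, hA, hB, hT⟩ => ⟨_, hT, hA, hB, rfl⟩, ?_⟩
  rintro ⟨T, hT, hA, hB, rfl⟩
  exact ⟨_, _, T.mor₁, T.mor₂, T.mor₃, hA, hB, hT⟩

lemma mem_extClass_of_iso {Z Z' : C} (e : Z ≅ Z') (hZ : Z ∈ extClass 𝒜 ℬ) :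
    Z' ∈ extClass 𝒜 ℬ := by
  obtain ⟨A, B, f, g, h, hA, hB, hT⟩ := hZ
  refine ⟨A, B, f ≫ e.hom, e.inv ≫ g, h, hA, hB, isomorphic_distinguished _ hT _ ?_⟩
  exact Triangle.isoMk _ _ (Iso.refl _) e.symm (Iso.refl _)
    (by simp [Triangle.mk]) (by simp [Triangle.mk]) (by simp [Triangle.mk])

lemma shift_mem_extClass {Z : C} (hZ : Z ∈ extClass 𝒜 ℬ) (n : ℤ) :
    Z⟦n⟧ ∈ extClass (shiftSet 𝒜 n) (shiftSet ℬ n) := by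
  obtain ⟨T, hT, hA, hB, rfl⟩ := mem_extClass_iff.1 hZ
  exact mem_extClass_iff.2 ⟨_, Triangle.shift_distinguished T hT n,
    shift_mem_shiftSet hA n, shift_mem_shiftSet hB n, rfl⟩

lemma mem_extClass_of_mem_left (h0 : (0 : C) ∈ ℬ) {A : C} (hA : A ∈ 𝒜) : A ∈ extClass 𝒜 ℬ :=
  mem_extClass_iff.2 ⟨_, contractible_distinguished A, hA, h0, rfl⟩

lemma eq_zero_of_mem_extClass {W Z : C} (hZ : Z ∈ extClass 𝒜 ℬ)
    (hZℬ : ∀ B ∈ ℬ, ∀ g : Z ⟶ B, g = 0) (hW𝒜 : ∀ A ∈ 𝒜, ∀ g : W ⟶ A, g = 0) (f : W ⟶ Z) :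
    f = 0 := by
  obtain ⟨T, hT, hA, hB, rfl⟩ := mem_extClass_iff.1 hZ
  obtain ⟨g, rfl⟩ := T.coyoneda_exact₂ hT f (by simp [hZℬ _ hB T.mor₂])
  simp [hW𝒜 _ hA g]

lemma subset_muInv {ℳ 𝒟 : Set C} (hrigid : homZero 𝒟 (shiftSet 𝒟 1))
    (h0 : (0 : C) ∈ shiftSet ℳ 1) : 𝒟 ⊆ muInv ℳ 𝒟 :=
  fun _ hD => ⟨mem_extClass_of_mem_left h0 hD, subset_leftPerpShift_iff.2 hrigid hD⟩

end Extension

namespace IsTorsionPair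

variable {𝒳 𝒴 : Set C} (hpair : IsTorsionPair 𝒳 𝒴)
include hpair

lemma mem_right_of_homZero (hY : IsSubcat 𝒴) {N : C} (hN : ∀ A ∈ 𝒳, ∀ f : A ⟶ N, f = 0) :
    N ∈ 𝒴 := by
  obtain ⟨T, hT, hA, hB, rfl⟩ := mem_extClass_iff.1 (hpair.2 N)
  have h₁ : T.mor₁ = 0 := hN _ hA _
  obtain ⟨e, -⟩ := exists_iso_binaryBiproduct_of_distTriang _ (rot_of_distTriang _ hT)
    (by rw [Triangle.rotate_mor₃, h₁, Functor.map_zero]; exact neg_zero)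
  exact (hY.mem_of_biprod (hY.mem_of_iso e hB)).1

lemma mem_left_of_homZero (hX : IsSubcat 𝒳) {N : C} (hN : ∀ B ∈ 𝒴, ∀ g : N ⟶ B, g = 0) :
    N ∈ 𝒳 := by
  obtain ⟨T, hT, hA, hB, rfl⟩ := mem_extClass_iff.1 (hpair.2 N)
  have h₂ : T.mor₂ = 0 := hN _ hB _
  obtain ⟨e, -⟩ := exists_iso_binaryBiproduct_of_distTriang _ (inv_rot_of_distTriang _ hT)
    (by rw [Triangle.invRotate_mor₃, h₂]; exact zero_comp)
  exact (hX.mem_of_biprod (hX.mem_of_iso e hA)).2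

lemma zero_mem_left (hX : IsSubcat 𝒳) : (0 : C) ∈ 𝒳 :=
  hpair.mem_left_of_homZero hX fun _ _ g => (isZero_zero C).eq_of_src g 0

lemma zero_mem_right (hY : IsSubcat 𝒴) : (0 : C) ∈ 𝒴 :=
  hpair.mem_right_of_homZero hY fun _ _ f => (isZero_zero C).eq_of_tgt f 0

lemma extClass_subset_right (hY : IsSubcat 𝒴) : extClass 𝒴 𝒴 ⊆ 𝒴 := by
  intro Z hZ
  obtain ⟨T, hT, hB₁, hB₂, rfl⟩ := mem_extClass_iff.1 hZ
  refine hpair.mem_right_of_homZero hY fun A hA u => ?_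
  obtain ⟨v, rfl⟩ := T.coyoneda_exact₂ hT u (hpair.1 hA hB₂ _)
  simp [hpair.1 hA hB₁ v]

lemma shift_neg_one_mem_extClass_core (hY : IsSubcat 𝒴) {B : C} (hB : B ∈ 𝒴) :
    B⟦(-1 : ℤ)⟧ ∈ extClass (𝒳 ∩ shiftSet 𝒴 (-1)) 𝒴 := by
  obtain ⟨T, hT, hA, hY₀, hT₂⟩ := mem_extClass_iff.1 (hpair.2 (B⟦(-1 : ℤ)⟧))
  have hA₁ : T.obj₁⟦(1 : ℤ)⟧ ∈ 𝒴 := hpair.extClass_subset_right hY <| mem_extClass_iff.2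
    ⟨_, rot_of_distTriang _ (rot_of_distTriang _ hT), hY₀,
      hY.mem_of_iso (hT₂ ▸ shiftNegShift B 1).symm hB, rfl⟩
  exact mem_extClass_iff.2
    ⟨T, hT, ⟨hA, mem_shiftSet_of_shift_mem (add_neg_cancel 1) hA₁⟩, hY₀, hT₂⟩

lemma subset_extClass_shift_core (hY : IsSubcat 𝒴) :
    𝒴 ⊆ extClass (shiftSet (𝒳 ∩ shiftSet 𝒴 (-1)) 1) (shiftSet 𝒴 1) := fun B hB =>
  mem_extClass_of_iso (shiftNegShift B 1)
    (shift_mem_extClass (hpair.shift_neg_one_mem_extClass_core hY hB) 1)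

variable {𝒟 : Set C}

lemma muInv_subset_left (hX : IsSubcat 𝒳) (hDY : homZero 𝒟 𝒴)
    (hYext : 𝒴 ⊆ extClass (shiftSet 𝒟 1) (shiftSet 𝒴 1)) : muInv 𝒳 𝒟 ⊆ 𝒳 := by
  rintro M ⟨hMext, hMperp⟩
  obtain ⟨T, hT, hD₀, hX₀, rfl⟩ := mem_extClass_iff.1 hMext
  refine hpair.mem_left_of_homZero hX fun B hB f => ?_
  obtain ⟨g, rfl⟩ := T.yoneda_exact₂ hT f (hDY hD₀ hB _)
  obtain ⟨T', hT', hD₁, hY₁, rfl⟩ := mem_extClass_iff.1 (hYext hB)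
  obtain ⟨h, rfl⟩ := T'.coyoneda_exact₂ hT' g (hpair.1.shift 1 hX₀ hY₁ _)
  rw [← Category.assoc, mem_leftPerpShift_iff.1 hMperp _ hD₁ (T.mor₂ ≫ h), zero_comp]

lemma inter_shiftSet_muInv_subset (hX : IsSubcat 𝒳) (hY : IsSubcat 𝒴)
    (hXD : homZero 𝒳 (shiftSet 𝒟 1)) :
    𝒳 ∩ shiftSet (muInv 𝒴 (shiftSet 𝒟 1)) (-1) ⊆ shiftSet 𝒴 (-1) := by
  rintro M ⟨hM, N, ⟨hN, -⟩, ⟨e⟩⟩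
  have hNX : N ∈ shiftSet 𝒳 1 :=
    mem_shiftSet_of_shift_mem (neg_add_cancel 1) (hX.mem_of_iso e.symm hM)
  exact ⟨N, hpair.mem_right_of_homZero hY fun A hA =>
    eq_zero_of_mem_extClass hN (fun _ hB => hpair.1.shift 1 hNX hB) (fun _ hD => hXD hA hD), ⟨e⟩⟩

end IsTorsionPair

/-- if the core `I` of the torsion pair `(𝒳,𝒴)` equals `𝒟`, then the
mutated core `I'` equals `I`, `𝒳' ⊆ 𝒳` and `𝒴 ⊆ 𝒴'`. -/
theorem stmt16 (k : Type*) [Field k] [Linear k C]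
    [∀ A B : C, Module.Finite k (A ⟶ B)] [IsIdempotentComplete C]
    (𝒳 𝒴 𝒟 : Set C) (hX : IsSubcat 𝒳) (hY : IsSubcat 𝒴) (hD : IsSubcat 𝒟)
    (hpair : IsTorsionPair 𝒳 𝒴)
    (hRF : RF 𝒟)
    (hDX : 𝒟 ⊆ 𝒳) (hXD : 𝒳 ⊆ shiftRightPerp 𝒟)
    (hID : 𝒳 ∩ shiftSet 𝒴 (-1:ℤ) = 𝒟) :
    muInv 𝒳 𝒟 ∩ shiftSet (muInv 𝒴 (shiftSet 𝒟 (1:ℤ))) (-1:ℤ) =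
      𝒳 ∩ shiftSet 𝒴 (-1:ℤ) ∧
    muInv 𝒳 𝒟 ⊆ 𝒳 ∧
    𝒴 ⊆ muInv 𝒴 (shiftSet 𝒟 (1:ℤ)) := by
  obtain ⟨-, -, hrigid, hperp⟩ := hRF
  have hDY : homZero 𝒟 𝒴 := hpair.1.mono hDX subset_rfl
  have hXD₁ : homZero 𝒳 (shiftSet 𝒟 1) := subset_leftPerpShift_iff.1 (hperp ▸ hXD)
  have hYext : 𝒴 ⊆ extClass (shiftSet 𝒟 1) (shiftSet 𝒴 1) :=
    hID ▸ hpair.subset_extClass_shift_core hY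
  have hX' : muInv 𝒳 𝒟 ⊆ 𝒳 := hpair.muInv_subset_left hX hDY hYext
  have hY' : 𝒴 ⊆ muInv 𝒴 (shiftSet 𝒟 1) :=
    fun B hB => ⟨hYext hB, subset_leftPerpShift_shiftSet hperp hDY hB⟩
  refine ⟨Set.Subset.antisymm ?_ ?_, hX', hY'⟩
  · rintro M ⟨hM, hM'⟩
    exact ⟨hX' hM, hpair.inter_shiftSet_muInv_subset hX hY hXD₁ ⟨hX' hM, hM'⟩⟩
  · rw [hID]
    intro D hD
    refine ⟨subset_muInv hrigid (zero_mem_shiftSet (hpair.zero_mem_left hX) 1) hD,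
      mem_shiftSet_of_shift_mem (add_neg_cancel 1) ?_⟩
    exact subset_muInv (hrigid.shift 1) (zero_mem_shiftSet (hpair.zero_mem_right hY) 1)
      (shift_mem_shiftSet hD 1)
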